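/- arXiv:1006.5414 — 3 statements merged into one kernel-verified Lean document; each statement's English description precedes it below -/
import Mathlib

section
/- For every element g of G = GL₃(F₂), the number of elements of H₁ that are conjugate in G to g equals the number of elements of H₂ that are conjugate in G to g; that is, for every conjugacy class C of G one has #(C ∩ H₁) = #(C ∩ H₂), so (G, H₁, H₂) is a Gassmann–Sunada triple. -/
/-!
Count `x ∈ G` with `x⁻¹ g x ∈ H`: the map `x ↦ x⁻¹ g x` onto `{h ∈ H | h ~ g}` has fibres that
are cosets of the centraliser of `g`, so the Gassmann condition for `H₁, H₂` amounts to these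
counts being equal. `H₂` is the stabiliser of the column vector `e₀`; since `GL₃(𝔽₂)` acts
transitively on non-zero vectors, the count for `H₂` is `|H₂|` times the number of non-zero
vectors fixed by `g`. Transposition turns the count for `H₁`, the stabiliser of the row vector
`e₀`, into the count for `H₂` with `g` replaced by `gᵀ`, and `g`, `gᵀ` fix equally many vectors
because `g - 1` and `(g - 1)ᵀ` have the same rank.
-/

/-- `H₁`: the subgroup of `G = GL₃(𝔽₂)` of matrices whose first row is `(1,0,0)`. -/
def H1 : Subgroup (GL (Fin 3) (ZMod 2)) where
  carrier := {M | (M : Matrix (Fin 3) (Fin 3) (ZMod 2)) 0 = ![1, 0, 0]}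
  one_mem' := by
    show ((1 : GL (Fin 3) (ZMod 2)) : Matrix (Fin 3) (Fin 3) (ZMod 2)) 0 = ![1, 0, 0]
    funext j; fin_cases j <;> simp [Matrix.one_apply]
  mul_mem' := by
    intro M N hM hN
    simp only [Set.mem_setOf_eq] at hM hN
    show ((M * N : GL (Fin 3) (ZMod 2)) : Matrix (Fin 3) (Fin 3) (ZMod 2)) 0 = ![1, 0, 0]
    have h : ((M * N : GL (Fin 3) (ZMod 2)) : Matrix (Fin 3) (Fin 3) (ZMod 2)) =
        (M : Matrix (Fin 3) (Fin 3) (ZMod 2)) * (N : Matrix (Fin 3) (Fin 3) (ZMod 2)) := rfl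
    rw [h]
    funext j
    simp only [Matrix.mul_apply]
    rw [Fin.sum_univ_three]
    simp [hM, hN]
  inv_mem' := by
    intro M hM
    simp only [Set.mem_setOf_eq] at hM
    have hrow : ∀ (N : Matrix (Fin 3) (Fin 3) (ZMod 2)), N 0 = Matrix.vecMul ![1,0,0] N := by
      intro N; funext j; simp [Matrix.vecMul, dotProduct, Fin.sum_univ_three]
    have e1M : Matrix.vecMul ![1,0,0] (M : Matrix (Fin 3) (Fin 3) (ZMod 2)) = ![1,0,0] := by
      rw [← hrow, hM]
    show ((M⁻¹ : GL (Fin 3) (ZMod 2)) : Matrix (Fin 3) (Fin 3) (ZMod 2)) 0 = ![1, 0, 0]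
    rw [hrow ((M⁻¹ : GL (Fin 3) (ZMod 2)) : Matrix (Fin 3) (Fin 3) (ZMod 2))]
    calc Matrix.vecMul ![1,0,0] ((M⁻¹ : GL (Fin 3) (ZMod 2)) : Matrix (Fin 3) (Fin 3) (ZMod 2))
        = Matrix.vecMul (Matrix.vecMul ![1,0,0] (M : Matrix (Fin 3) (Fin 3) (ZMod 2)))
          ((M⁻¹ : GL (Fin 3) (ZMod 2)) : Matrix (Fin 3) (Fin 3) (ZMod 2)) := by rw [e1M]
      _ = Matrix.vecMul ![1,0,0] ((M : Matrix (Fin 3) (Fin 3) (ZMod 2)) *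
          ((M⁻¹ : GL (Fin 3) (ZMod 2)) : Matrix (Fin 3) (Fin 3) (ZMod 2))) := by
            rw [Matrix.vecMul_vecMul]
      _ = Matrix.vecMul ![1,0,0] (1 : Matrix (Fin 3) (Fin 3) (ZMod 2)) := by rw [M.mul_inv]
      _ = ![1,0,0] := by rw [← hrow]; funext j; fin_cases j <;> simp [Matrix.one_apply]

/-- `H₂`: the subgroup of `G = GL₃(𝔽₂)` of matrices whose first column is `(1,0,0)ᵀ`. -/
def H2 : Subgroup (GL (Fin 3) (ZMod 2)) where
  carrier := {M | (fun i => (M : Matrix (Fin 3) (Fin 3) (ZMod 2)) i 0) = ![1, 0, 0]}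
  one_mem' := by
    funext i; fin_cases i <;> simp [Matrix.one_apply]
  mul_mem' := by
    intro M N hM hN
    simp only [Set.mem_setOf_eq] at hM hN
    have hM' : ∀ k, (M : Matrix (Fin 3) (Fin 3) (ZMod 2)) k 0 = ![1,0,0] k :=
      fun k => congrFun hM k
    have hN' : ∀ k, (N : Matrix (Fin 3) (Fin 3) (ZMod 2)) k 0 = ![1,0,0] k :=
      fun k => congrFun hN k
    show (fun i => ((M : Matrix (Fin 3) (Fin 3) (ZMod 2)) *
      (N : Matrix (Fin 3) (Fin 3) (ZMod 2))) i 0) = ![1, 0, 0]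
    funext i
    simp only [Matrix.mul_apply]
    rw [Fin.sum_univ_three, hN' 0, hN' 1, hN' 2]
    simp [hM' i]
  inv_mem' := by
    intro M hM
    simp only [Set.mem_setOf_eq] at hM
    have hcol : ∀ (N : Matrix (Fin 3) (Fin 3) (ZMod 2)),
        (fun i => N i 0) = N.mulVec ![1,0,0] := by
      intro N; funext i; simp [Matrix.mulVec, dotProduct, Fin.sum_univ_three]
    have e1M : (M : Matrix (Fin 3) (Fin 3) (ZMod 2)).mulVec ![1,0,0] = ![1,0,0] := by
      rw [← hcol, hM]
    show (fun i => ((M⁻¹ : GL (Fin 3) (ZMod 2)) : Matrix (Fin 3) (Fin 3) (ZMod 2)) i 0)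
      = ![1, 0, 0]
    rw [hcol ((M⁻¹ : GL (Fin 3) (ZMod 2)) : Matrix (Fin 3) (Fin 3) (ZMod 2))]
    calc ((M⁻¹ : GL (Fin 3) (ZMod 2)) : Matrix (Fin 3) (Fin 3) (ZMod 2)).mulVec ![1,0,0]
        = ((M⁻¹ : GL (Fin 3) (ZMod 2)) : Matrix (Fin 3) (Fin 3) (ZMod 2)).mulVec
          ((M : Matrix (Fin 3) (Fin 3) (ZMod 2)).mulVec ![1,0,0]) := by rw [e1M]
      _ = (((M⁻¹ : GL (Fin 3) (ZMod 2)) : Matrix (Fin 3) (Fin 3) (ZMod 2)) *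
          (M : Matrix (Fin 3) (Fin 3) (ZMod 2))).mulVec ![1,0,0] := by
            rw [Matrix.mulVec_mulVec]
      _ = (1 : Matrix (Fin 3) (Fin 3) (ZMod 2)).mulVec ![1,0,0] := by rw [M.inv_mul]
      _ = ![1,0,0] := by
            rw [← hcol]; funext i; fin_cases i <;> simp [Matrix.one_apply]

open Matrix Subgroup

theorem Set.ncard_eq_ncard_mul_of_mapsTo {α β : Type*} [Finite α] [Finite β] {s : Set α}
    {t : Set β} {f : α → β} (hf : MapsTo f s t) {c : ℕ}
    (hc : ∀ b ∈ t, {a | a ∈ s ∧ f a = b}.ncard = c) :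
    s.ncard = t.ncard * c := by
  classical
  have := Fintype.ofFinite α
  have := Fintype.ofFinite β
  rw [ncard_eq_toFinset_card', ncard_eq_toFinset_card',
    Finset.card_eq_sum_card_fiberwise (f := f) (t := t.toFinset)
      (by rwa [coe_toFinset, coe_toFinset])]
  refine Finset.sum_const_nat fun b hb => ?_
  rw [← hc b (mem_toFinset.mp hb), ncard_eq_toFinset_card']
  congr 1
  ext a
  simp

section ConjugacyCount

variable {G : Type*} [Group G]

theorem ncard_conj_eq_nat_card_centralizer {g h : G} (hgh : IsConj g h) :
    {x : G | x⁻¹ * g * x = h}.ncard = Nat.card (centralizer {g}) := by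
  obtain ⟨c, rfl⟩ := isConj_iff.mp hgh
  refine Nat.card_congr (Equiv.subtypeEquiv (Equiv.mulRight c) fun x => ?_)
  simp only [Set.mem_ofPred_eq, mem_centralizer_singleton_iff, Equiv.coe_mulRight]
  constructor <;> intro h
  · calc x * c * g = x * (c * g * c⁻¹) * c := by group
      _ = x * (x⁻¹ * g * x) * c := by rw [h]
      _ = g * (x * c) := by group
  · calc x⁻¹ * g * x = x⁻¹ * (g * (x * c)) * c⁻¹ := by group
      _ = x⁻¹ * (x * c * g) * c⁻¹ := by rw [h]
      _ = c * g * c⁻¹ := by group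

theorem ncard_conj_mem_eq_ncard_mul_nat_card_centralizer [Finite G] (s : Set G) (g : G) :
    {x : G | x⁻¹ * g * x ∈ s}.ncard =
      {h | h ∈ s ∧ IsConj g h}.ncard * Nat.card (centralizer {g}) := by
  refine Set.ncard_eq_ncard_mul_of_mapsTo (t := {h | h ∈ s ∧ IsConj g h})
    (f := fun x => x⁻¹ * g * x) (fun x hx => ⟨hx, isConj_iff.mpr ⟨x⁻¹, by rw [inv_inv]⟩⟩)
    fun h hh => ?_
  rw [← ncard_conj_eq_nat_card_centralizer hh.2]
  congr 1
  ext x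
  exact ⟨And.right, fun (hx : x⁻¹ * g * x = h) => ⟨show x⁻¹ * g * x ∈ s from hx ▸ hh.1, hx⟩⟩

end ConjugacyCount

namespace Matrix

variable {K n : Type*} [Field K] [Fintype n]

theorem finrank_ker_mulVecLin_transpose (A : Matrix n n K) :
    Module.finrank K (LinearMap.ker Aᵀ.mulVecLin) =
      Module.finrank K (LinearMap.ker A.mulVecLin) := by
  have hA := LinearMap.finrank_range_add_finrank_ker A.mulVecLin
  have hAt := LinearMap.finrank_range_add_finrank_ker Aᵀ.mulVecLin
  have := rank_transpose A
  rw [Matrix.rank, Matrix.rank] at this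
  omega

theorem ncard_fixed_ne_zero_transpose [DecidableEq n] [Finite K] (A : Matrix n n K) :
    {w : n → K | w ≠ 0 ∧ Aᵀ *ᵥ w = w}.ncard = {w : n → K | w ≠ 0 ∧ A *ᵥ w = w}.ncard := by
  have fixed_eq_ker (B : Matrix n n K) :
      {w : n → K | w ≠ 0 ∧ B *ᵥ w = w} =
        (LinearMap.ker (B - 1).mulVecLin : Set (n → K)) \ {0} := by
    ext w
    simp [sub_eq_zero, and_comm]
  obtain ⟨e⟩ := FiniteDimensional.nonempty_linearEquiv_of_finrank_eq
    ((A - 1).finrank_ker_mulVecLin_transpose)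
  rw [fixed_eq_ker, fixed_eq_ker, show Aᵀ - 1 = (A - 1)ᵀ by simp,
    Set.ncard_sdiff_singleton_of_mem (zero_mem _), Set.ncard_sdiff_singleton_of_mem (zero_mem _)]
  exact congrArg (· - 1) (Nat.card_congr e.toEquiv)

end Matrix

namespace Matrix.GeneralLinearGroup

section CommRing

variable {R n : Type*} [CommRing R] [Fintype n] [DecidableEq n]

def transpose (x : GL n R) : GL n R where
  val := (x : Matrix n n R)ᵀ
  inv := ((x⁻¹ : GL n R) : Matrix n n R)ᵀ
  val_inv := by rw [← transpose_mul, x.inv_mul, transpose_one]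
  inv_val := by rw [← transpose_mul, x.mul_inv, transpose_one]

@[simp]
theorem coe_transpose (x : GL n R) : (transpose x : Matrix n n R) = (x : Matrix n n R)ᵀ := rfl

theorem transpose_inv (x : GL n R) : transpose x⁻¹ = (transpose x)⁻¹ := rfl

theorem transpose_transpose (x : GL n R) : transpose (transpose x) = x :=
  Units.ext (Matrix.transpose_transpose _)

theorem transpose_mul (x y : GL n R) : transpose (x * y) = transpose y * transpose x :=
  Units.ext (Matrix.transpose_mul _ _)

theorem ncard_conj_vecMul_fixed_eq_transpose (g : GL n R) (v : n → R) :
    {x : GL n R | v ᵥ* ((x⁻¹ * g * x : GL n R) : Matrix n n R) = v}.ncard =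
      {x : GL n R | ((x⁻¹ * transpose g * x : GL n R) : Matrix n n R) *ᵥ v = v}.ncard := by
  have involutive : Function.Involutive fun x : GL n R => (transpose x)⁻¹ := fun x => by
    simp only [← transpose_inv, transpose_transpose, inv_inv]
  refine Nat.card_congr (Equiv.subtypeEquiv involutive.toPerm fun x => ?_)
  have hconj : ((transpose x)⁻¹)⁻¹ * transpose g * (transpose x)⁻¹ =
      transpose (x⁻¹ * g * x) := by
    rw [transpose_mul, transpose_mul, transpose_inv, inv_inv, mul_assoc]
  simp only [Set.mem_ofPred_eq, Function.Involutive.coe_toPerm, hconj, coe_transpose,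
    mulVec_transpose]

theorem mulVec_inj (x : GL n R) {v w : n → R} :
    (x : Matrix n n R) *ᵥ v = x *ᵥ w ↔ v = w :=
  (mulVec_injective_of_isUnit x.isUnit).eq_iff

theorem conj_mulVec_eq_iff (g x : GL n R) (v : n → R) :
    ((x⁻¹ * g * x : GL n R) : Matrix n n R) *ᵥ v = v ↔
      (g : Matrix n n R) *ᵥ (x *ᵥ v) = x *ᵥ v := by
  rw [← mulVec_inj x]
  simp [mulVec_mulVec, ← mul_assoc]

end CommRing

variable {K n : Type*} [Field K] [Fintype n] [DecidableEq n]

theorem exists_mulVec_eq {v w : n → K} (hv : v ≠ 0) (hw : w ≠ 0) :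
    ∃ x : GL n K, (x : Matrix n n K) *ᵥ v = w := by
  obtain ⟨e, he⟩ := Submodule.exists_linearEquiv_restrict_eq
    ((LinearEquiv.toSpanNonzeroSingleton K _ v hv).symm.trans
      (LinearEquiv.toSpanNonzeroSingleton K _ w hw))
  refine ⟨toLin.symm (LinearMap.GeneralLinearGroup.ofLinearEquiv e), ?_⟩
  have := he (LinearEquiv.toSpanNonzeroSingleton K _ v hv 1)
  rw [LinearEquiv.trans_apply, LinearEquiv.symm_apply_apply] at this
  rw [← mulVecLin_apply, ← toLin_apply, MulEquiv.apply_symm_apply]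
  simpa using this.symm

theorem ncard_mulVec_eq {v w : n → K} (hv : v ≠ 0) (hw : w ≠ 0) :
    {x : GL n K | (x : Matrix n n K) *ᵥ v = w}.ncard =
      {x : GL n K | (x : Matrix n n K) *ᵥ v = v}.ncard := by
  obtain ⟨y, rfl⟩ := exists_mulVec_eq hv hw
  refine (Nat.card_congr (Equiv.subtypeEquiv (Equiv.mulLeft y) fun x => ?_)).symm
  simp [← mulVec_mulVec, mulVec_inj]

variable [Finite K]

theorem ncard_conj_mulVec_fixed_eq_mul (g : GL n K) {v : n → K} (hv : v ≠ 0) :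
    {x : GL n K | ((x⁻¹ * g * x : GL n K) : Matrix n n K) *ᵥ v = v}.ncard =
      {w : n → K | w ≠ 0 ∧ (g : Matrix n n K) *ᵥ w = w}.ncard *
        {x : GL n K | (x : Matrix n n K) *ᵥ v = v}.ncard := by
  refine Set.ncard_eq_ncard_mul_of_mapsTo
    (t := {w : n → K | w ≠ 0 ∧ (g : Matrix n n K) *ᵥ w = w})
    (f := fun x : GL n K => (x : Matrix n n K) *ᵥ v)
    (fun x hx => ⟨?_, (conj_mulVec_eq_iff g x v).mp hx⟩) fun w hw => ?_
  · rw [Ne, ← mulVec_zero (x : Matrix n n K), mulVec_inj]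
    exact hv
  · rw [← ncard_mulVec_eq hv hw.1]
    congr 1
    ext x
    exact ⟨And.right, fun hx => ⟨(conj_mulVec_eq_iff g x v).mpr (by rw [hx]; exact hw.2), hx⟩⟩

theorem ncard_conj_vecMul_fixed_eq_ncard_conj_mulVec_fixed (g : GL n K) {v : n → K}
    (hv : v ≠ 0) :
    {x : GL n K | v ᵥ* ((x⁻¹ * g * x : GL n K) : Matrix n n K) = v}.ncard =
      {x : GL n K | ((x⁻¹ * g * x : GL n K) : Matrix n n K) *ᵥ v = v}.ncard := by
  rw [ncard_conj_vecMul_fixed_eq_transpose, ncard_conj_mulVec_fixed_eq_mul _ hv,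
    ncard_conj_mulVec_fixed_eq_mul _ hv, coe_transpose, ncard_fixed_ne_zero_transpose]

end Matrix.GeneralLinearGroup

theorem mem_H1_iff (M : GL (Fin 3) (ZMod 2)) :
    M ∈ H1 ↔ Pi.single 0 1 ᵥ* (M : Matrix (Fin 3) (Fin 3) (ZMod 2)) = Pi.single 0 1 := by
  rw [single_one_vecMul, show (Pi.single 0 1 : Fin 3 → ZMod 2) = ![1, 0, 0] by decide]
  rfl

theorem mem_H2_iff (M : GL (Fin 3) (ZMod 2)) :
    M ∈ H2 ↔ (M : Matrix (Fin 3) (Fin 3) (ZMod 2)) *ᵥ Pi.single 0 1 = Pi.single 0 1 := by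
  rw [mulVec_single_one, show (Pi.single 0 1 : Fin 3 → ZMod 2) = ![1, 0, 0] by decide]
  rfl

/-- For every element `g` of `G = GL₃(𝔽₂)`, the number of elements of `H₁` conjugate in `G`
to `g` equals the number of elements of `H₂` conjugate in `G` to `g`; i.e. for every
conjugacy class `C` of `G` one has `#(C ∩ H₁) = #(C ∩ H₂)`, so `(G, H₁, H₂)` is a
Gassmann–Sunada triple. -/
theorem gassmann_sunada_triple (g : GL (Fin 3) (ZMod 2)) :
    Set.ncard {h : GL (Fin 3) (ZMod 2) | h ∈ H1 ∧ IsConj g h} =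
    Set.ncard {h : GL (Fin 3) (ZMod 2) | h ∈ H2 ∧ IsConj g h} := by
  have key := GeneralLinearGroup.ncard_conj_vecMul_fixed_eq_ncard_conj_mulVec_fixed g
    (v := Pi.single 0 1) (Pi.single_ne_zero_iff.mpr one_ne_zero)
  have count (H : Subgroup (GL (Fin 3) (ZMod 2))) :=
    ncard_conj_mem_eq_ncard_mul_nat_card_centralizer (H : Set (GL (Fin 3) (ZMod 2))) g
  simp only [SetLike.mem_coe] at count
  refine Nat.eq_of_mul_eq_mul_right (Nat.card_pos (α := centralizer {g})) ?_
  rw [← count, ← count]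
  simpa only [mem_H1_iff, mem_H2_iff] using key
end

section
/- The subgroups H₁ and H₂ of G = GL₃(F₂) are not conjugate: there is no g ∈ G with g H₁ g⁻¹ = H₂. (Hence the Gassmann–Sunada triple (G, H₁, H₂) is non-trivial.) -/
/-! `H₂` is the stabilizer of `e₀` for the action of `G` on column vectors, so if
`g H₁ g⁻¹ = H₂` then `H₁` is the stabilizer of the nonzero vector `g⁻¹ e₀`. But `H₁` fixes no
nonzero vector: it contains the transvections `1 + E_{ij}` with `i ≠ 0`, and `1 + E_{ij}` fixes
`v` only if `v j = 0`. -/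

open Matrix MulAction

namespace Matrix.SpecialLinearGroup

variable {ι F : Type*} [DecidableEq ι] [Fintype ι] [CommRing F]

theorem transvection_smul {i j : ι} (hij : i ≠ j) (b : F) (v : ι → F) :
    transvection hij b • v = v + Pi.single i (b * v j) := by
  rw [SpecialLinearGroup.smul_def, transvection_coe, smul_eq_mulVec, add_mulVec, one_mulVec,
    single_mulVec_eq, ← Pi.single_smul, smul_eq_mul, mul_one]

theorem transvection_smul_eq_self_iff {i j : ι} (hij : i ≠ j) (b : F) (v : ι → F) :
    transvection hij b • v = v ↔ b * v j = 0 := by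
  rw [transvection_smul, add_eq_left, Pi.single_eq_zero_iff]

end Matrix.SpecialLinearGroup

theorem H2_eq_stabilizer :
    H2 = stabilizer (GL (Fin 3) (ZMod 2)) (Pi.single 0 1 : Fin 3 → ZMod 2) := by
  ext M
  rw [mem_stabilizer_iff, Units.smul_def, smul_eq_mulVec, mulVec_single_one,
    show (Pi.single 0 1 : Fin 3 → ZMod 2) = ![1, 0, 0] by decide]
  rfl

theorem transvection_mem_H1 {i j : Fin 3} (hij : i ≠ j) (hi : i ≠ 0) (b : ZMod 2) :
    (SpecialLinearGroup.transvection hij b : GL (Fin 3) (ZMod 2)) ∈ H1 := by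
  show transvection i j b 0 = ![1, 0, 0]
  rw [← updateRow_eq_transvection, updateRow_ne hi.symm]
  decide

theorem eq_zero_of_H1_le_stabilizer {v : Fin 3 → ZMod 2}
    (hv : H1 ≤ stabilizer (GL (Fin 3) (ZMod 2)) v) : v = 0 := by
  have coord_eq_zero {i j : Fin 3} (hij : i ≠ j) (hi : i ≠ 0) : v j = 0 := by
    simpa using (SpecialLinearGroup.transvection_smul_eq_self_iff hij 1 v).1
      (hv (transvection_mem_H1 hij hi 1))
  ext k
  fin_cases k
  exacts [coord_eq_zero (i := 1) (by decide) (by decide),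
    coord_eq_zero (i := 2) (by decide) (by decide), coord_eq_zero (i := 1) (by decide) (by decide)]

/-- The subgroups `H₁` and `H₂` of `G = GL₃(𝔽₂)` are not conjugate: there is no `g ∈ G`
with `g H₁ g⁻¹ = H₂`. (Hence the Gassmann–Sunada triple `(G, H₁, H₂)` is non-trivial.) -/
theorem H1_H2_not_conjugate :
    ¬ ∃ g : GL (Fin 3) (ZMod 2),
      Subgroup.map (MulAut.conj g).toMonoidHom H1 = H2 := by
  rintro ⟨g, hg⟩
  have hH1 : H1 = stabilizer _ (g⁻¹ • (Pi.single 0 1 : Fin 3 → ZMod 2)) :=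
    calc H1 = (H1.map (MulAut.conj g).toMonoidHom).map (MulAut.conj g⁻¹).toMonoidHom := by
          ext x; simp [mul_assoc]
      _ = _ := by rw [hg, H2_eq_stabilizer, stabilizer_smul_eq_stabilizer_map_conj]
  simpa using congrArg (g • ·) (eq_zero_of_H1_le_stabilizer hH1.le)
end

section
/- Let G be a finitely generated group and m : G → ℝ≥0 a function whose image is a closed and discrete subset of ℝ (equivalently, m takes only finitely many values below any given bound). Then the jump set Jump(Fil^•_m G) of the induced filtration is a finite set, and every jump value lies in the image of m. -/
/-- The filtration of a group `G` induced by a class function / length function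
`m : G → ℝ≥0`: at level `δ`, the subgroup generated by all elements of `m`-value
less than `δ`. -/
def filSubgroup {G : Type*} [Group G] (m : G → NNReal) (δ : ℝ) : Subgroup G :=
  Subgroup.closure {g : G | (m g : ℝ) < δ}

/-- The jump set of the induced filtration: the set of `δ > 0` such that
`Fil^δ_m G ≠ Fil^{δ'}_m G` for every `δ' > δ`. -/
def jumpSet {G : Type*} [Group G] (m : G → NNReal) : Set ℝ :=
  {δ : ℝ | 0 < δ ∧ ∀ δ' : ℝ, δ < δ' → filSubgroup m δ ≠ filSubgroup m δ'}

/-!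
If no value of `m` lies in `[δ, δ')`, the filtration does not change between `δ` and `δ'`;
so at a jump `δ` every interval `[δ, δ + ε)` meets the image of `m`, and closedness of the image
puts `δ` in it. Above the largest `m`-value of a finite generating set the filtration is all of
`G`, so the jumps are bounded, and a bounded closed discrete subset of `ℝ` is finite.
-/

theorem IsClosed.finite_inter_Icc {α : Type*} [TopologicalSpace α] [Preorder α]
    [CompactIccSpace α] {s : Set α} (hc : IsClosed s) (hd : IsDiscrete s) (a b : α) :
    (s ∩ Set.Icc a b).Finite :=
  (isCompact_Icc.inter_left hc).finite (hd.mono Set.inter_subset_left)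

section Filtration

variable {G : Type*} [Group G] (m : G → NNReal)

theorem filSubgroup_eq_of_forall_notMem_Ico {δ δ' : ℝ} (hδ : δ ≤ δ')
    (h : ∀ g, (m g : ℝ) ∉ Set.Ico δ δ') : filSubgroup m δ = filSubgroup m δ' := by
  unfold filSubgroup
  congr 1
  ext g
  exact ⟨fun hg => hg.trans_le hδ, fun hg => not_le.1 fun hle => h g ⟨hle, hg⟩⟩

theorem exists_eq_of_mem_jumpSet (hclosed : IsClosed (Set.range fun g => (m g : ℝ)))
    {δ : ℝ} (hδ : δ ∈ jumpSet m) : ∃ g, (m g : ℝ) = δ := by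
  by_contra hδm
  obtain ⟨ε, hε, hball⟩ := Metric.isOpen_iff.mp hclosed.isOpen_compl δ hδm
  refine hδ.2 (δ + ε) (by linarith) (filSubgroup_eq_of_forall_notMem_Ico m (by linarith) ?_)
  intro g hg
  refine hball ?_ ⟨g, rfl⟩
  rw [Real.ball_eq_Ioo]
  exact ⟨by linarith [hg.1], hg.2⟩

theorem filSubgroup_eq_top_of_closure_eq_top {S : Set G} (hS : Subgroup.closure S = ⊤)
    {δ : ℝ} (h : ∀ g ∈ S, (m g : ℝ) < δ) : filSubgroup m δ = ⊤ :=
  eq_top_iff.2 (hS ▸ Subgroup.closure_mono h)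

theorem Group.FG.exists_forall_filSubgroup_eq_top (hfg : Group.FG G) :
    ∃ B : ℝ, ∀ δ, B < δ → filSubgroup m δ = ⊤ := by
  obtain ⟨S, hS⟩ := hfg.out
  refine ⟨(S.sup m : NNReal), fun δ hδ => filSubgroup_eq_top_of_closure_eq_top m hS fun g hg => ?_⟩
  exact (NNReal.coe_le_coe.2 (Finset.le_sup hg)).trans_lt hδ

theorem jumpSet_subset_Icc {B : ℝ} (hB : ∀ δ, B < δ → filSubgroup m δ = ⊤) :
    jumpSet m ⊆ Set.Icc 0 B := fun δ hδ =>
  ⟨hδ.1.le, not_lt.1 fun hBδ =>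
    hδ.2 (δ + 1) (by linarith) (by rw [hB δ hBδ, hB (δ + 1) (by linarith)])⟩

end Filtration

/-- Let `G` be a finitely generated group and `m : G → ℝ≥0` a function whose image is a
closed and discrete subset of `ℝ`. Then the jump set of the induced filtration is finite,
and every jump value lies in the image of `m`. -/
theorem jumpSet_finite_and_subset_range {G : Type*} [Group G] (hfg : Group.FG G)
    (m : G → NNReal)
    (hclosed : IsClosed {x : ℝ | ∃ g : G, (m g : ℝ) = x})
    (hdiscrete : DiscreteTopology {x : ℝ | ∃ g : G, (m g : ℝ) = x}) :
    (jumpSet m).Finite ∧ ∀ δ ∈ jumpSet m, ∃ g : G, (m g : ℝ) = δ := by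
  have hrange : ∀ δ ∈ jumpSet m, ∃ g : G, (m g : ℝ) = δ :=
    fun δ hδ => exists_eq_of_mem_jumpSet m hclosed hδ
  obtain ⟨B, hB⟩ := hfg.exists_forall_filSubgroup_eq_top m
  have hfinite := hclosed.finite_inter_Icc hdiscrete.isDiscrete 0 B
  exact ⟨hfinite.subset fun δ hδ => ⟨hrange δ hδ, jumpSet_subset_Icc m hB hδ⟩, hrange⟩
end
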